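/- arXiv:1501.07858 — 2 statements merged into one kernel-verified Lean document; each statement's English description precedes it below -/
import Mathlib

section
/- If all entries of x ∈ ℝ^{h+1} are pairwise distinct, then the ordinal pattern of the reflected vector (-x_0, ..., -x_h) equals the reversal (r_h, r_{h-1}, ..., r_0) of the ordinal pattern (r_0, ..., r_h) of x. -/
/-- `r` is the ordinal pattern of `x = (x_0, ..., x_h)`. -/
def IsOrdinalPattern {h : ℕ} (x : Fin (h + 1) → ℝ) (r : Equiv.Perm (Fin (h + 1))) : Prop :=
  (∀ j k : Fin (h + 1), j ≤ k → x (r k) ≤ x (r j)) ∧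
  (∀ j : Fin h, x (r j.castSucc) = x (r j.succ) → r j.succ < r j.castSucc)

/-- With pairwise distinct entries there are no ties to break. -/
theorem isOrdinalPattern_iff_antitone {h : ℕ} {x : Fin (h + 1) → ℝ} (hx : Function.Injective x)
    (r : Equiv.Perm (Fin (h + 1))) : IsOrdinalPattern x r ↔ Antitone (x ∘ r) :=
  ⟨fun hr _ _ hjk => hr.1 _ _ hjk, fun hr =>
    ⟨fun _ _ hjk => hr hjk, fun j htie =>
      absurd (r.injective (hx htie)) (Fin.castSucc_lt_succ (i := j)).ne⟩⟩

/-- if the entries of `x` are pairwise distinct and `r = (r_0,...,r_h)` is the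
ordinal pattern of `x`, then the ordinal pattern of the reflected vector `(-x_0,...,-x_h)`
is the reversal `(r_h,...,r_0)` of `r`. -/
theorem ordinal_pattern_neg_eq_reverse {h : ℕ} (x : Fin (h + 1) → ℝ)
    (hx : Function.Injective x) (r : Equiv.Perm (Fin (h + 1)))
    (hr : IsOrdinalPattern x r) :
    IsOrdinalPattern (fun j => -x j) (Fin.revPerm.trans r) := by
  rw [isOrdinalPattern_iff_antitone hx] at hr
  exact (isOrdinalPattern_iff_antitone (x := fun j => -x j) (neg_injective.comp hx) _).2
    (hr.comp Fin.rev_anti).neg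
end

section
/- For vectors x, x' ∈ ℝ^{h+1} with x = (x_0,...,x_h), x' = (x'_0,...,x'_h), and ε > 0: if Π(x) ≠ Π(x'), then either |x_j − x'_j| > ε for some j, or |x_j − x_k| ≤ 2ε for some j ≠ k. Equivalently, 1_{Π(x) ≠ Π(x')} ≤ Σ_{j=0}^h 1_{|x_j − x'_j| > ε} + Σ_{0 ≤ j ≠ k ≤ h} 1_{|x_j − x_k| ≤ 2ε}. -/
open Classical in
/-- The ordinal pattern `Π(x)` of a vector `x ∈ ℝ^{h+1}`. -/
noncomputable def ordPat {h : ℕ} (x : Fin (h + 1) → ℝ) : Equiv.Perm (Fin (h + 1)) :=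
  if hr : ∃ r, IsOrdinalPattern x r then hr.choose else Equiv.refl _

open Function OrderDual

lemma lt_of_abs_sub_le_of_add_two_mul_lt {α : Type*} [Field α] [LinearOrder α]
    [IsStrictOrderedRing α] {a a' b b' ε : α} (ha : |a - a'| ≤ ε) (hb : |b - b'| ≤ ε)
    (hab : a + 2 * ε < b) : a' < b' := by
  obtain ⟨-, ha'⟩ := abs_sub_le_iff.1 ha
  obtain ⟨hb', -⟩ := abs_sub_le_iff.1 hb
  linarith

lemma injective_of_lt_imp_lt {ι α β : Type*} [LinearOrder α] [Preorder β] {x : ι → α}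
    {x' : ι → β} (hx : Injective x) (hlt : ∀ j k, x j < x k → x' j < x' k) : Injective x' := by
  intro j k hjk
  by_contra hne
  rcases lt_or_gt_of_ne (hx.ne hne) with h | h
  · exact (hlt j k h).ne hjk
  · exact (hlt k j h).ne hjk.symm

section OrdinalPattern

variable {h : ℕ} {x x' : Fin (h + 1) → ℝ} {r r' : Equiv.Perm (Fin (h + 1))}

lemma isOrdinalPattern_sort_of_injective (hx : Injective x) :
    IsOrdinalPattern x (Tuple.sort (toDual ∘ x)) :=
  ⟨fun _ _ hjk => Tuple.monotone_sort (toDual ∘ x) hjk,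
    fun _ hxj => absurd ((Tuple.sort _).injective (hx hxj)) Fin.castSucc_lt_succ.ne⟩

lemma IsOrdinalPattern.eq_of_injective (hx : Injective x) (hr : IsOrdinalPattern x r)
    (hr' : IsOrdinalPattern x r') : r = r' := by
  have hcomp : (toDual ∘ x) ∘ r = (toDual ∘ x) ∘ r' := Tuple.unique_monotone hr.1 hr'.1
  exact Equiv.ext fun i => hx (congrFun hcomp i)

lemma isOrdinalPattern_ordPat (hr : IsOrdinalPattern x r) : IsOrdinalPattern x (ordPat x) := by
  have hex : ∃ r, IsOrdinalPattern x r := ⟨r, hr⟩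
  rw [ordPat, dif_pos hex]
  exact hex.choose_spec

lemma IsOrdinalPattern.of_lt_imp_lt (hx : Injective x)
    (hlt : ∀ j k, x j < x k → x' j < x' k) (hr : IsOrdinalPattern x r) :
    IsOrdinalPattern x' r := by
  refine ⟨fun j k hjk => ?_, fun j hx'j => ?_⟩
  · rcases (hr.1 j k hjk).lt_or_eq with hlt' | heq
    · exact (hlt _ _ hlt').le
    · rw [hx heq]
  · have hj := r.injective (injective_of_lt_imp_lt hx hlt hx'j)
    exact absurd hj Fin.castSucc_lt_succ.ne

lemma ordPat_eq_of_lt_imp_lt (hx : Injective x) (hlt : ∀ j k, x j < x k → x' j < x' k) :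
    ordPat x = ordPat x' := by
  have hPx := isOrdinalPattern_ordPat (isOrdinalPattern_sort_of_injective hx)
  have hPx' := hPx.of_lt_imp_lt hx hlt
  exact hPx'.eq_of_injective (injective_of_lt_imp_lt hx hlt) (isOrdinalPattern_ordPat hPx')

end OrdinalPattern

theorem pattern_change_requires_big_move_or_near_tie_general
    {h : ℕ} (x x' : Fin (h + 1) → ℝ) (ε : ℝ)
    (hne : ordPat x ≠ ordPat x') :
    (∃ j, ε < |x j - x' j|) ∨ (∃ j k, j ≠ k ∧ |x j - x k| ≤ 2 * ε) := by
  by_contra! ⟨hmove, hsep⟩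
  have hε : 0 ≤ ε := (abs_nonneg _).trans (hmove 0)
  have hx : Injective x := fun j k hjk => by
    by_contra hjk'
    have := hsep j k hjk'
    rw [hjk, sub_self, abs_zero] at this
    linarith
  refine hne (ordPat_eq_of_lt_imp_lt hx fun j k hlt => ?_)
  have hgap : x j + 2 * ε < x k := by
    have := hsep j k (hx.ne_iff.1 hlt.ne)
    rw [abs_sub_comm, abs_of_pos (sub_pos.2 hlt)] at this
    linarith
  exact lt_of_abs_sub_le_of_add_two_mul_lt (hmove j) (hmove k) hgap

/-- if `Π(x) ≠ Π(x')` and `ε > 0`, then either some coordinate moved by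
more than `ε`, or two coordinates of `x` are within `2ε` of each other. -/
theorem pattern_change_requires_big_move_or_near_tie
    {h : ℕ} (x x' : Fin (h + 1) → ℝ) (ε : ℝ) (hε : 0 < ε)
    (hne : ordPat x ≠ ordPat x') :
    (∃ j, ε < |x j - x' j|) ∨ (∃ j k, j ≠ k ∧ |x j - x k| ≤ 2 * ε) :=
  pattern_change_requires_big_move_or_near_tie_general x x' ε hne
end
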